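/- For dismal numbers p ≪ m and q ≪ n (dominance in each digit), we have p ⊞ q ≪ m ⊞ n and p ⊠ q ≪ m ⊠ n. -/

import Mathlib

/-!
Neither dismal operation produces carries, so their digits can be read off directly: the `i`-th
digit of `m ⊞ n` is `max mᵢ nᵢ` and the `k`-th digit of `m ⊠ n` is `sup_{i ≤ k} min mᵢ n_{k-i}`.
Both expressions are monotone in the digits of `m` and `n`.
-/

/-- The `i`-th base-`b` digit of `n`. -/
def digit (b n i : ℕ) : ℕ := n / b ^ i % b

/-- Dismal addition in base `b`: digitwise maximum of base-`b` digits. -/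
def dadd (b m n : ℕ) : ℕ :=
  ∑ i ∈ Finset.range (m + n + 1), max (digit b m i) (digit b n i) * b ^ i

/-- Dismal multiplication in base `b`: digit convolution with `min` as digit
product and `max` as digit sum (no carries). -/
def dmul (b m n : ℕ) : ℕ :=
  ∑ k ∈ Finset.range (m + n + 1),
    ((Finset.range (k + 1)).sup fun i => min (digit b m i) (digit b n (k - i))) * b ^ k

/-- The number of base-`b` digits of `n`. -/
def dlen (b n : ℕ) : ℕ := (Nat.digits b n).length

/-- Digitwise dominance: every base-`b` digit of `p` is at most the
corresponding digit of `n`. -/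
def ddom (b p n : ℕ) : Prop := ∀ i, digit b p i ≤ digit b n i

section Digit

variable {b : ℕ}

theorem digit_lt (hb : 0 < b) (n i : ℕ) : digit b n i < b :=
  Nat.mod_lt _ hb

theorem digit_eq_zero_of_le (hb : 1 < b) {n i : ℕ} (h : n ≤ i) : digit b n i = 0 := by
  have hlt : n < b ^ i := (Nat.lt_pow_self hb).trans_le (Nat.pow_le_pow_right (by omega) h)
  simp [digit, Nat.div_eq_of_lt hlt]

theorem digit_succ (n i : ℕ) : digit b n (i + 1) = digit b (n / b) i := by
  simp only [digit, pow_succ', Nat.div_div_eq_div_mul]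

theorem sum_range_succ_mul_pow (c : ℕ → ℕ) (N : ℕ) :
    ∑ i ∈ Finset.range (N + 1), c i * b ^ i =
      c 0 + b * ∑ i ∈ Finset.range N, c (i + 1) * b ^ i := by
  rw [Finset.sum_range_succ', add_comm, Finset.mul_sum]
  simp only [pow_succ', pow_zero, mul_one, mul_left_comm _ b]

theorem digit_sum_range_mul_pow (hb : 0 < b) {c : ℕ → ℕ} (hc : ∀ i, c i < b) (N j : ℕ) :
    digit b (∑ i ∈ Finset.range N, c i * b ^ i) j = if j < N then c j else 0 := by
  induction j generalizing N c with
  | zero =>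
    cases N with
    | zero => simp [digit]
    | succ N =>
      simp [digit, sum_range_succ_mul_pow, Nat.add_mul_mod_self_left, Nat.mod_eq_of_lt (hc 0)]
  | succ j ih =>
    cases N with
    | zero => simp [digit]
    | succ N =>
      have hdiv : (∑ i ∈ Finset.range (N + 1), c i * b ^ i) / b
          = ∑ i ∈ Finset.range N, c (i + 1) * b ^ i := by
        rw [sum_range_succ_mul_pow, Nat.add_mul_div_left _ _ hb, Nat.div_eq_of_lt (hc 0), zero_add]
      rw [digit_succ, hdiv, ih (fun i => hc (i + 1))]
      simp

theorem digit_sum_range_mul_pow_of_eq_zero (hb : 0 < b) {c : ℕ → ℕ} (hc : ∀ i, c i < b)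
    {N : ℕ} (hN : ∀ i, N ≤ i → c i = 0) (j : ℕ) :
    digit b (∑ i ∈ Finset.range N, c i * b ^ i) j = c j := by
  rw [digit_sum_range_mul_pow hb hc]
  split_ifs with hj
  · rfl
  · exact (hN j (not_lt.mp hj)).symm

theorem digit_dadd (hb : 1 < b) (m n i : ℕ) :
    digit b (dadd b m n) i = max (digit b m i) (digit b n i) := by
  refine digit_sum_range_mul_pow_of_eq_zero (by omega)
    (fun i => max_lt (digit_lt (by omega) m i) (digit_lt (by omega) n i)) (fun i hi => ?_) i
  rw [digit_eq_zero_of_le hb (by omega : m ≤ i), digit_eq_zero_of_le hb (by omega : n ≤ i),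
    max_self]

theorem digit_dmul (hb : 1 < b) (m n k : ℕ) :
    digit b (dmul b m n) k =
      (Finset.range (k + 1)).sup fun i => min (digit b m i) (digit b n (k - i)) := by
  refine digit_sum_range_mul_pow_of_eq_zero (by omega)
    (fun k => (Finset.sup_lt_iff (by simpa using (by omega : 0 < b))).mpr
      fun i _ => (min_le_left _ _).trans_lt (digit_lt (by omega) m i))
    (fun k hk => Nat.le_zero.mp (Finset.sup_le fun i _ => ?_)) k
  -- each term has `i ≥ m` or `k - i ≥ n`, so one of the two digits vanishes
  rcases le_or_gt m i with hmi | hmi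
  · exact (min_le_left _ _).trans (digit_eq_zero_of_le hb hmi).le
  · exact (min_le_right _ _).trans (digit_eq_zero_of_le hb (by omega : n ≤ k - i)).le

end Digit

/-- dominance is preserved by dismal addition and multiplication. -/
theorem dismal_dom_add_mul (b : ℕ) (hb : 2 ≤ b) (p q m n : ℕ)
    (hp : ddom b p m) (hq : ddom b q n) :
    ddom b (dadd b p q) (dadd b m n) ∧ ddom b (dmul b p q) (dmul b m n) := by
  constructor
  · intro i
    rw [digit_dadd hb, digit_dadd hb]
    exact max_le_max (hp i) (hq i)
  · intro k
    rw [digit_dmul hb, digit_dmul hb]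
    exact Finset.sup_mono_fun fun i _ => min_le_min (hp i) (hq (k - i))
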